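/- Let G be a subgroup of the symmetric group of ℕ. A type of G is a pair T = ⟨F | x⟩ with F ⊆ ℕ finite and x ∉ F; its typeset σ(T) is the orbit of x under the pointwise stabilizer G_F, and its rank ρ(T) is the G-age of σ(T) (finite sets A with g[A] ⊆ σ(T) for some g ∈ G). Call T age indivisible if σ(T) is age indivisible for the G-age. Suppose G has two age indivisible types T and S, both with infinite typesets, such that ρ(T) \ ρ(S) ≠ ∅ and ρ(S) \ ρ(T) ≠ ∅. Then G is divisible: there exists a partition of ℕ into two parts such that no injection f : ℕ → ℕ whose restriction to every finite set agrees with some element of G has image contained in either part. -/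

import Mathlib

/-!
Let `P` be the set of points `n` that have an `⟨E | y⟩`-anchor (some `g ∈ G` with `g y = n`)
sending `E` colex-below `h[F]` for every `⟨F | x⟩`-anchor `h` of `n`.

If an embedding `f` lands in `P`, then for every `u` in the typeset of `⟨F | x⟩` the point `f u`
has an `⟨F | x⟩`-anchor agreeing with `f` on `F`, hence an `⟨E | y⟩`-anchor `g_u` with `g_u[E]`
colex-below the fixed set `f[F]`. So `g_u` restricted to `E` takes only finitely many values, and
`f` maps each class of this finite colouring into the image of the typeset of `⟨E | y⟩` under a
single `g_u`. Age indivisibility, extended from two to finitely many parts by compactness, puts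
the whole rank of `⟨F | x⟩` into the rank of `⟨E | y⟩`, a contradiction. If `f` lands in the
complement of `P`, the colex order being total turns this around and the same argument applies
with the types swapped.
-/

/-- The `G`-age of a set `S`: finite subsets that can be mapped into `S`
by some element of `G`. -/
def Gage (G : Subgroup (Equiv.Perm ℕ)) (S : Set ℕ) : Set (Finset ℕ) :=
  {A | ∃ g ∈ G, ∀ a ∈ A, g a ∈ S}

/-- `S` is age indivisible for `G`: for every partition of `S` into two parts,
one part has the same `G`-age as `S`. -/
def AgeIndivisibleSet (G : Subgroup (Equiv.Perm ℕ)) (S : Set ℕ) : Prop :=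
  ∀ S₀ S₁ : Set ℕ, Disjoint S₀ S₁ → S₀ ∪ S₁ = S →
    Gage G S₀ = Gage G S ∨ Gage G S₁ = Gage G S

/-- The typeset of the type `⟨F | x⟩`: the orbit of `x` under the pointwise
stabilizer of `F` in `G`. -/
def Typeset (G : Subgroup (Equiv.Perm ℕ)) (F : Finset ℕ) (x : ℕ) : Set ℕ :=
  {y | ∃ g ∈ G, (∀ a ∈ F, g a = a) ∧ g x = y}

open Finset

variable {G : Subgroup (Equiv.Perm ℕ)}

section Gage

variable {S : Set ℕ} {A B : Finset ℕ}

theorem mem_gage_of_subset_of_mem (hBA : B ⊆ A) (hA : A ∈ Gage G S) : B ∈ Gage G S :=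
  let ⟨g, hg, hgA⟩ := hA
  ⟨g, hg, fun a ha => hgA a (hBA ha)⟩

theorem mem_gage_of_coe_subset (hA : ↑A ⊆ S) : A ∈ Gage G S :=
  ⟨1, G.one_mem, fun _ ha => hA ha⟩

theorem mem_gage_of_image_mem {g : Equiv.Perm ℕ} (hg : g ∈ G) (hA : A.image g ∈ Gage G S) :
    A ∈ Gage G S :=
  let ⟨h, hh, hhA⟩ := hA
  ⟨h * g, G.mul_mem hh hg, fun a ha => hhA (g a) (mem_image_of_mem g ha)⟩

theorem exists_image_subset_of_mem_gage (hA : A ∈ Gage G S) :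
    ∃ g ∈ G, ↑(A.image g) ⊆ S :=
  let ⟨g, hg, hgA⟩ := hA
  ⟨g, hg, fun b hb => by
    obtain ⟨a, ha, rfl⟩ := mem_image.1 hb
    exact hgA a ha⟩

end Gage

theorem exists_forall_of_forall_exists_finset {α κ : Type*} [Finite κ]
    (p : Finset α → (α → κ) → Prop)
    (hloc : ∀ W c c', (∀ a ∈ W, c a = c' a) → p W c → p W c')
    (hmono : ∀ W W' c, W' ⊆ W → p W c → p W' c) (h : ∀ W, ∃ c, p W c) :
    ∃ c, ∀ W, p W c := by
  classical
  let _ : TopologicalSpace κ := ⊥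
  have : DiscreteTopology κ := ⟨rfl⟩
  have hopen : ∀ (W : Finset α) (s : Set (α → κ)),
      (∀ c c', (∀ a ∈ W, c a = c' a) → c ∈ s → c' ∈ s) → IsOpen s := by
    refine fun W s hs => isOpen_iff_forall_mem_open.2 fun c hc => ?_
    exact ⟨(W : Set α).pi fun a => {c a}, fun c' hc' => hs c c' (fun a ha => (hc' a ha).symm) hc,
      isOpen_set_pi W.finite_toSet fun _ _ => isOpen_discrete _, fun a _ => rfl⟩
  have hclosed : ∀ W, IsClosed {c | p W c} := fun W =>
    isOpen_compl_iff.1 <| hopen W _ fun c c' hcc' hc hc' =>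
      hc (hloc W c' c (fun a ha => (hcc' a ha).symm) hc')
  obtain ⟨c, hc⟩ := IsCompact.nonempty_iInter_of_directed_nonempty_isCompact_isClosed
    (fun W => {c | p W c})
    (fun W₁ W₂ => ⟨W₁ ∪ W₂, fun c hc => hmono _ _ c subset_union_left hc,
      fun c hc => hmono _ _ c subset_union_right hc⟩)
    h (fun W => (hclosed W).isCompact) hclosed
  exact ⟨c, Set.mem_iInter.1 hc⟩

section Coloring

variable {κ : Type*} [DecidableEq κ] {U V : Set ℕ}

def ClassesInGage (G : Subgroup (Equiv.Perm ℕ)) (V : Set ℕ) (W : Finset ℕ) (c : ℕ → κ) :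
    Prop :=
  ∀ i, W.filter (c · = i) ∈ Gage G V

theorem exists_forall_classesInGage [Finite κ] [Nonempty κ]
    (h : ∀ W : Finset ℕ, ↑W ⊆ U → ∃ c : ℕ → κ, ClassesInGage G V W c) :
    ∃ c : ℕ → κ, ∀ W : Finset ℕ, ↑W ⊆ U → ClassesInGage G V W c := by
  classical
  have hloc (W : Finset ℕ) (c c' : ℕ → κ) (hcc' : ∀ a ∈ W, c a = c' a)
      (hc : ClassesInGage G V W c) : ClassesInGage G V W c' := fun i => by
    have hclass : W.filter (c' · = i) = W.filter (c · = i) :=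
      filter_congr fun a ha => by rw [hcc' a ha]
    exact hclass ▸ hc i
  have hmono (W W' : Finset ℕ) (c : ℕ → κ) (hW' : W' ⊆ W) (hc : ClassesInGage G V W c) :
      ClassesInGage G V W' c := fun i =>
    mem_gage_of_subset_of_mem (filter_subset_filter _ hW') (hc i)
  obtain ⟨c, hc⟩ := exists_forall_of_forall_exists_finset
    (fun W c => ClassesInGage G V (W.filter (· ∈ U)) c)
    (fun W c c' hcc' => hloc _ c c' fun a ha => hcc' a (mem_filter.1 ha).1)
    (fun W W' c hW' => hmono _ _ c (filter_subset_filter _ hW'))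
    fun W => h _ fun a ha => (mem_filter.1 ha).2
  refine ⟨c, fun W hW => ?_⟩
  simpa [filter_true_of_mem fun a ha => hW ha] using hc W

/- Finite subsets of `U` embed into the union of all but one colour class only one at a time, by
different elements of `G`; hence colourings are asked for each finite set separately, and glued
by compactness. -/
theorem gage_subset_of_forall_fin_coloring (hU : AgeIndivisibleSet G U) :
    ∀ k : ℕ, (∀ W : Finset ℕ, ↑W ⊆ U → ∃ c : ℕ → Fin (k + 1), ClassesInGage G V W c) →
      Gage G U ⊆ Gage G V
  | 0, h, A, hA => by
    obtain ⟨g, hg, hgA⟩ := exists_image_subset_of_mem_gage hA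
    obtain ⟨c, hc⟩ := h _ hgA
    refine mem_gage_of_image_mem hg ?_
    simpa [Subsingleton.elim _ (0 : Fin 1)] using hc 0
  | k + 1, h, A, hA => by
    obtain ⟨c, hc⟩ := exists_forall_classesInGage h
    rcases hU {u ∈ U | c u = Fin.last _} {u ∈ U | c u ≠ Fin.last _}
      (Set.disjoint_left.2 fun u hu hu' => hu'.2 hu.2)
      (by ext u; by_cases hu : c u = Fin.last _ <;> simp [hu]) with hlast | hrest
    · obtain ⟨g, hg, hgA⟩ := exists_image_subset_of_mem_gage (hlast ▸ hA)
      refine mem_gage_of_image_mem hg ?_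
      have hmonochrome : (A.image g).filter (c · = Fin.last _) = A.image g :=
        filter_true_of_mem fun u hu => (hgA hu).2
      simpa [hmonochrome] using hc _ (hgA.trans fun u hu => hu.1) (Fin.last _)
    · refine gage_subset_of_forall_fin_coloring hU k (fun W hW => ?_) hA
      obtain ⟨g, hg, hgW⟩ := exists_image_subset_of_mem_gage (hrest ▸ mem_gage_of_coe_subset hW)
      let c' (w : ℕ) : Fin (k + 1) := if hw : c (g w) = Fin.last _ then 0 else (c (g w)).castPred hw
      have hc' : ∀ w ∈ W, ∀ i, c' w = i ↔ c (g w) = i.castSucc := fun w hw i => by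
        simp only [c', dif_neg (hgW (mem_image_of_mem g hw)).2, Fin.castPred_eq_iff_eq_castSucc]
      refine ⟨c', fun i => mem_gage_of_image_mem hg ?_⟩
      have hclass : W.filter (c' · = i) = W.filter fun w => c (g w) = i.castSucc :=
        filter_congr fun w hw => hc' w hw i
      rw [hclass, ← filter_image (p := (c · = i.castSucc))]
      exact hc _ (hgW.trans fun u hu => hu.1) _

theorem gage_subset_of_forall_coloring [Finite κ] (hU : AgeIndivisibleSet G U)
    (h : ∀ W : Finset ℕ, ↑W ⊆ U → ∃ c : ℕ → κ, ClassesInGage G V W c) :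
    Gage G U ⊆ Gage G V := by
  obtain ⟨c₀, -⟩ := h ∅ (by simp)
  have : Nonempty κ := ⟨c₀ 0⟩
  have hcard : Nat.card κ = Nat.card κ - 1 + 1 := (Nat.succ_pred_eq_of_pos Nat.card_pos).symm
  let e : κ ≃ Fin (Nat.card κ - 1 + 1) := (Finite.equivFin κ).trans (finCongr hcard)
  refine gage_subset_of_forall_fin_coloring hU (Nat.card κ - 1) fun W hW => ?_
  obtain ⟨c, hc⟩ := h W hW
  refine ⟨e ∘ c, fun i => ?_⟩
  simpa only [Function.comp_apply, e.eq_symm_apply] using hc (e.symm i)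

end Coloring

section Anchors

def LocallyIn (G : Subgroup (Equiv.Perm ℕ)) (f : ℕ → ℕ) : Prop :=
  ∀ A : Finset ℕ, ∃ g ∈ G, ∀ a ∈ A, f a = g a

variable {f : ℕ → ℕ} {F E : Finset ℕ} {x y : ℕ}

theorem exists_agree_of_mem_typeset (hf : LocallyIn G f) {u : ℕ} (hu : u ∈ Typeset G F x) :
    ∃ h ∈ G, h x = f u ∧ F.image h = F.image f := by
  obtain ⟨g, hg, hgF, rfl⟩ := hu
  obtain ⟨g', hg', hg'f⟩ := hf (insert (g x) F)
  refine ⟨g' * g, G.mul_mem hg' hg, (hg'f _ (mem_insert_self _ _)).symm, image_congr fun a ha => ?_⟩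
  simp only [Equiv.Perm.mul_apply, hgF a ha]
  exact (hg'f a (mem_insert_of_mem ha)).symm

theorem inv_apply_mem_typeset {g h : Equiv.Perm ℕ} (hg : g ∈ G) (hh : h ∈ G)
    (hgh : ∀ a ∈ E, g a = h a) : g⁻¹ (h y) ∈ Typeset G E y :=
  ⟨g⁻¹ * h, G.mul_mem (G.inv_mem hg) hh, fun a ha => by simp [← hgh a ha], rfl⟩

theorem gage_subset_of_bounded_anchors {U : Set ℕ} (hU : AgeIndivisibleSet G U)
    (hf : LocallyIn G f) (c₀ : ℕ) (hanchor : ∀ u ∈ U, ∃ g ∈ G, g y = f u ∧ ∀ a ∈ E, g a < c₀) :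
    Gage G U ⊆ Gage G (Typeset G E y) := by
  classical
  choose! anchor hanchor_mem hanchor_y hanchor_lt using hanchor
  let label (u : ℕ) : Option (E → Fin c₀) :=
    if hu : u ∈ U then some fun a => ⟨anchor u a, hanchor_lt u hu a a.2⟩ else none
  have hlabel {u v : ℕ} (hu : u ∈ U) (hv : v ∈ U) (huv : label u = label v) :
      ∀ a ∈ E, anchor v a = anchor u a := fun a ha => by
    simp only [label, dif_pos hu, dif_pos hv, Option.some_inj] at huv
    exact congrArg Fin.val (congrFun huv ⟨a, ha⟩).symm
  refine gage_subset_of_forall_coloring hU fun W hW => ⟨label, fun i => ?_⟩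
  obtain ⟨g, hg, hfg⟩ := hf W
  rcases (W.filter (label · = i)).eq_empty_or_nonempty with hempty | ⟨w₀, hw₀⟩
  · exact hempty ▸ mem_gage_of_coe_subset (by simp)
  rw [mem_filter] at hw₀
  refine ⟨(anchor w₀)⁻¹ * g, G.mul_mem (G.inv_mem (hanchor_mem w₀ (hW hw₀.1))) hg,
    fun w hw => ?_⟩
  rw [mem_filter] at hw
  rw [Equiv.Perm.mul_apply, ← hfg w hw.1, ← hanchor_y w (hW hw.1)]
  exact inv_apply_mem_typeset (hanchor_mem w₀ (hW hw₀.1)) (hanchor_mem w (hW hw.1))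
    (hlabel (hW hw.1) (hW hw₀.1) (hw.2.trans hw₀.2.symm))

theorem gage_subset_of_colex_bounded_anchors {U : Set ℕ} (hU : AgeIndivisibleSet G U)
    (hf : LocallyIn G f) (B : Finset ℕ)
    (hanchor : ∀ u ∈ U, ∃ g ∈ G, g y = f u ∧ toColex (E.image g) ≤ toColex B) :
    Gage G U ⊆ Gage G (Typeset G E y) := by
  refine gage_subset_of_bounded_anchors hU hf (B.sup id + 1) fun u hu => ?_
  obtain ⟨g, hg, hgy, hgB⟩ := hanchor u hu
  exact ⟨g, hg, hgy, fun a ha => Colex.forall_lt_mono hgB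
    (fun b hb => Nat.lt_succ_of_le (le_sup (f := id) hb)) _ (mem_image_of_mem g ha)⟩

def colexCut (G : Subgroup (Equiv.Perm ℕ)) (F : Finset ℕ) (x : ℕ) (E : Finset ℕ) (y : ℕ) :
    Set ℕ :=
  {n | ∃ g ∈ G, g y = n ∧ ∀ h ∈ G, h x = n → toColex (E.image g) < toColex (F.image h)}

theorem range_not_subset_colexCut (hT : AgeIndivisibleSet G (Typeset G F x))
    (hTS : ¬ Gage G (Typeset G F x) ⊆ Gage G (Typeset G E y)) (hf : LocallyIn G f) :
    ¬ Set.range f ⊆ colexCut G F x E y := fun hrange =>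
  hTS <| gage_subset_of_colex_bounded_anchors hT hf (F.image f) fun u hu => by
    obtain ⟨h, hh, hhx, hhF⟩ := exists_agree_of_mem_typeset hf hu
    obtain ⟨g, hg, hgy, hgh⟩ := hrange ⟨u, rfl⟩
    exact ⟨g, hg, hgy, hhF ▸ (hgh h hh hhx).le⟩

theorem range_not_subset_compl_colexCut (hS : AgeIndivisibleSet G (Typeset G E y))
    (hST : ¬ Gage G (Typeset G E y) ⊆ Gage G (Typeset G F x)) (hf : LocallyIn G f) :
    ¬ Set.range f ⊆ (colexCut G F x E y)ᶜ := fun hrange =>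
  hST <| gage_subset_of_colex_bounded_anchors hS hf (E.image f) fun v hv => by
    obtain ⟨g, hg, hgy, hgE⟩ := exists_agree_of_mem_typeset hf hv
    have hv' : f v ∉ colexCut G F x E y := hrange ⟨v, rfl⟩
    simp only [colexCut, Set.mem_ofPred_eq, not_exists, not_and, not_forall, not_lt] at hv'
    obtain ⟨h, hh, hhx, hhg⟩ := hv' g hg hgy
    exact ⟨h, hh, hhx, hgE ▸ hhg⟩

end Anchors

theorem divisible_of_incomparable_types_general (G : Subgroup (Equiv.Perm ℕ))
    (F : Finset ℕ) (x : ℕ)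
    (E : Finset ℕ) (y : ℕ)
    (hTind : AgeIndivisibleSet G (Typeset G F x))
    (hSind : AgeIndivisibleSet G (Typeset G E y))
    (h₁ : ¬ Gage G (Typeset G F x) ⊆ Gage G (Typeset G E y))
    (h₂ : ¬ Gage G (Typeset G E y) ⊆ Gage G (Typeset G F x)) :
    ∃ P : Set ℕ, ∀ f : ℕ → ℕ, Function.Injective f →
      (∀ A : Finset ℕ, ∃ g ∈ G, ∀ a ∈ A, f a = g a) →
      ¬ Set.range f ⊆ P ∧ ¬ Set.range f ⊆ Pᶜ :=
  ⟨colexCut G F x E y, fun _ _ hf =>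
    ⟨range_not_subset_colexCut hTind h₁ hf, range_not_subset_compl_colexCut hSind h₂ hf⟩⟩

theorem divisible_of_incomparable_types (G : Subgroup (Equiv.Perm ℕ))
    (F : Finset ℕ) (x : ℕ) (hx : x ∉ F)
    (E : Finset ℕ) (y : ℕ) (hy : y ∉ E)
    (hTinf : (Typeset G F x).Infinite) (hSinf : (Typeset G E y).Infinite)
    (hTind : AgeIndivisibleSet G (Typeset G F x))
    (hSind : AgeIndivisibleSet G (Typeset G E y))
    (h₁ : ¬ Gage G (Typeset G F x) ⊆ Gage G (Typeset G E y))
    (h₂ : ¬ Gage G (Typeset G E y) ⊆ Gage G (Typeset G F x)) :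
    ∃ P : Set ℕ, ∀ f : ℕ → ℕ, Function.Injective f →
      (∀ A : Finset ℕ, ∃ g ∈ G, ∀ a ∈ A, f a = g a) →
      ¬ Set.range f ⊆ P ∧ ¬ Set.range f ⊆ Pᶜ :=
  divisible_of_incomparable_types_general G F x E y hTind hSind h₁ h₂
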